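/- arXiv:2210.16233 — 3 statements merged into one kernel-verified Lean document; each statement's English description precedes it below -/
import Mathlib

section
/- Let (X, μ) be a probability space and T : X → X an invertible measure-preserving ergodic transformation (bi-measurable bijection with μ(T(E)) = μ(E) for all measurable E). Let c > 0, let (F_k)_{k≥0} be measurable subsets of X, and let (h_k)_{k≥0} be natural numbers with h_k → ∞ such that, for every k, the images T^i(F_k) for 0 ≤ i < h_k are pairwise disjoint and the Rohlin tower 𝒯_k = ⋃_{i=0}^{h_k−1} T^i(F_k) satisfies μ(𝒯_k) > c. Then μ(⋂_{n≥0} ⋃_{k≥n} 𝒯_k) = 1, i.e. almost every point belongs to infinitely many of the towers 𝒯_k. -/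
/-!
A point on one of the lowest `h - p` levels of a Rohlin tower of height `h` stays in the tower
for the next `p` steps, so once `h_k ≥ 2p` the points whose first `p` iterates all lie in `𝒯_k`
fill at least half of `𝒯_k`, i.e. measure at least `c / 2`. By the reverse Fatou inequality the
points whose first `p` iterates all lie in `Λ = limsup 𝒯_k` also have measure at least `c / 2`,
and letting `p → ∞`, so does `K = ⋂ⱼ T⁻ʲ Λ`. As `K ⊆ T⁻¹ K`, ergodicity forces `μ K = 1`, and
`K ⊆ Λ`.
-/

open MeasureTheory Filter Set

section Ergodic

variable {α : Type*} [MeasurableSpace α] {μ : Measure α}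

lemma le_measure_limsup_of_frequently_le [IsFiniteMeasure μ] {s : ℕ → Set α} {δ : ENNReal}
    (hs : ∀ n, MeasurableSet (s n)) (h : ∃ᶠ n in atTop, δ ≤ μ (s n)) :
    δ ≤ μ (limsup s atTop) := by
  have htail : Antitone fun n => ⋃ k ≥ n, s k := fun m n hmn =>
    biUnion_mono (fun k hk => le_trans hmn hk) fun _ _ => le_rfl
  simp only [limsup_eq_iInf_iSup_of_nat, iSup_eq_iUnion, iInf_eq_iInter]
  rw [htail.measure_iInter
    (fun n => (MeasurableSet.biUnion (to_countable _) fun k _ => hs k).nullMeasurableSet)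
    ⟨0, measure_ne_top μ _⟩]
  refine le_iInf fun n => ?_
  obtain ⟨k, hnk, hk⟩ := (frequently_atTop.1 h) n
  exact hk.trans (measure_mono (subset_biUnion_of_mem (u := s) hnk))

lemma MeasureTheory.MeasurePreserving.measure_image_emb {f : α → α}
    (hf : MeasurePreserving f μ μ) (he : MeasurableEmbedding f) (s : Set α) :
    μ (f '' s) = μ s := by
  rw [← hf.measure_preimage_emb he, he.injective.preimage_image]

lemma MeasureTheory.measurePreserving_of_measure_image_eq {f : α → α} (hf : Measurable f)
    (hsurj : Function.Surjective f) (h : ∀ s, MeasurableSet s → μ (f '' s) = μ s) :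
    MeasurePreserving f μ μ :=
  ⟨hf, Measure.ext fun s hs => by
    rw [Measure.map_apply hf hs, ← h _ (hf hs), image_preimage_eq s hsurj]⟩

lemma preErgodic_of_measure_symmDiff_preimage_eq_zero [IsProbabilityMeasure μ] {f : α → α}
    (h : ∀ s, MeasurableSet s → μ (symmDiff s (f ⁻¹' s)) = 0 → μ s = 0 ∨ μ s = 1) :
    PreErgodic f μ where
  aeconst_set s hs hinv := by
    rw [eventuallyConst_set', ae_eq_empty, ae_eq_univ, prob_compl_eq_zero_iff hs]
    exact h s hs (by simp [hinv])

lemma MeasurableEmbedding.iterate {f : α → α} (hf : MeasurableEmbedding f) :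
    ∀ n, MeasurableEmbedding f^[n]
  | 0 => MeasurableEmbedding.id
  | n + 1 => (hf.iterate n).comp hf

theorem Ergodic.measure_limsup_eq_one [IsProbabilityMeasure μ] {f : α → α} (hf : Ergodic f μ)
    {A : ℕ → Set α} (hA : ∀ k, MeasurableSet (A k)) {δ : ENNReal} (hδ : 0 < δ)
    (hfreq : ∀ p, ∃ᶠ k in atTop, δ ≤ μ (⋂ j ≤ p, f^[j] ⁻¹' A k)) :
    μ (limsup A atTop) = 1 := by
  set Λ := limsup A atTop
  have hΛ : MeasurableSet Λ := .measurableSet_limsup hA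
  have hpre : ∀ j, MeasurableSet (f^[j] ⁻¹' Λ) := fun j => hf.measurable.iterate j hΛ
  set K := ⋂ j, f^[j] ⁻¹' Λ
  have hK_le : ∀ p, δ ≤ μ (⋂ j ≤ p, f^[j] ⁻¹' Λ) := fun p =>
    (le_measure_limsup_of_frequently_le
      (fun k => .iInter fun j => .iInter fun _ => hf.measurable.iterate j (hA k)) (hfreq p)).trans
      (measure_mono fun x hx => by
        simp only [Λ, mem_iInter, mem_preimage, mem_limsup_iff_frequently_mem] at hx ⊢
        exact fun j hj => hx.mono fun k hk => hk j hj)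
  have hK : δ ≤ μ K := by
    have hanti : Antitone fun p => ⋂ j ≤ p, f^[j] ⁻¹' Λ := fun m n hmn =>
      biInter_mono (fun j hj => le_trans hj hmn) fun _ _ => le_rfl
    have hKeq : K = ⋂ p, ⋂ j ≤ p, f^[j] ⁻¹' Λ := by
      ext x
      simp only [K, mem_iInter]
      exact ⟨fun h _ j _ => h j, fun h j => h j j le_rfl⟩
    rw [hKeq, hanti.measure_iInter (fun p => (MeasurableSet.iInter fun j =>
      .iInter fun _ => hpre j).nullMeasurableSet) ⟨0, measure_ne_top μ _⟩]
    exact le_iInf hK_le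
  have hKinv : K ⊆ f ⁻¹' K := fun x hx => by
    simp only [K, mem_iInter, mem_preimage, ← Function.iterate_succ_apply] at hx ⊢
    exact fun j => hx (j + 1)
  rcases hf.ae_empty_or_univ_of_ae_le_preimage (MeasurableSet.iInter hpre).nullMeasurableSet
    hKinv.eventuallyLE with hK0 | hK1
  · exact absurd (measure_congr hK0 ▸ hK) (by simpa using hδ.ne')
  · exact prob_le_one.antisymm (measure_univ (μ := μ) ▸ measure_congr hK1 ▸
      measure_mono (iInter_subset _ 0))

end Ergodic

def rohlinTower {α : Type*} (f : α → α) (F : Set α) (h : ℕ) : Set α :=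
  ⋃ i ∈ Finset.range h, f^[i] '' F

section RohlinTower

variable {α : Type*} [MeasurableSpace α] {μ : Measure α} {f : α → α} {F : Set α} {h : ℕ}

lemma measurableSet_rohlinTower (he : MeasurableEmbedding f) (hF : MeasurableSet F) :
    MeasurableSet (rohlinTower f F h) :=
  Finset.measurableSet_biUnion _ fun i _ => (he.iterate i).measurableSet_image.2 hF

omit [MeasurableSpace α] in
lemma rohlinTower_sub_subset_iInter_preimage (p : ℕ) :
    rohlinTower f F (h - p) ⊆ ⋂ j ≤ p, f^[j] ⁻¹' rohlinTower f F h := by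
  simp only [rohlinTower, iUnion_subset_iff, Finset.mem_range]
  rintro i hi _ ⟨x, hx, rfl⟩
  simp only [mem_iInter, mem_preimage, mem_iUnion]
  exact fun j hj => ⟨j + i, by omega, x, hx, Function.iterate_add_apply f j i x⟩

lemma measure_rohlinTower (hf : MeasurePreserving f μ μ) (he : MeasurableEmbedding f)
    (hF : MeasurableSet F)
    (hdisj : (↑(Finset.range h) : Set ℕ).PairwiseDisjoint fun i => f^[i] '' F) :
    μ (rohlinTower f F h) = h * μ F := by
  rw [rohlinTower, measure_biUnion_finset hdisj fun i _ =>
    (he.iterate i).measurableSet_image.2 hF]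
  simp [(hf.iterate _).measure_image_emb (he.iterate _)]

lemma measure_rohlinTower_div_two_le (hf : MeasurePreserving f μ μ) (he : MeasurableEmbedding f)
    (hF : MeasurableSet F)
    (hdisj : (↑(Finset.range h) : Set ℕ).PairwiseDisjoint fun i => f^[i] '' F)
    {p : ℕ} (hp : 2 * p ≤ h) :
    μ (rohlinTower f F h) / 2 ≤ μ (⋂ j ≤ p, f^[j] ⁻¹' rohlinTower f F h) := by
  refine ENNReal.div_le_of_le_mul' ?_
  calc μ (rohlinTower f F h) = h * μ F := measure_rohlinTower hf he hF hdisj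
    _ ≤ 2 * ((h - p : ℕ) * μ F) := by
      rw [← mul_assoc]
      gcongr
      exact_mod_cast (by omega : h ≤ 2 * (h - p))
    _ = 2 * μ (rohlinTower f F (h - p)) := by
      rw [measure_rohlinTower hf he hF (hdisj.subset (by simp))]
    _ ≤ 2 * μ (⋂ j ≤ p, f^[j] ⁻¹' rohlinTower f F h) := by
      gcongr
      exact rohlinTower_sub_subset_iInter_preimage p

end RohlinTower

theorem rohlin_towers_limsup_full_measure_general
    {X : Type*} [MeasurableSpace X] (μ : Measure X) [IsProbabilityMeasure μ]
    (T S : X → X) (hTmeas : Measurable T)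
    (hSmeas : Measurable S)
    (hST : Function.LeftInverse S T) (hTS : Function.RightInverse S T)
    (hTpres : ∀ E : Set X, MeasurableSet E → μ (T '' E) = μ E)
    (hErg : ∀ E : Set X, MeasurableSet E → μ (symmDiff E (T ⁻¹' E)) = 0 →
      μ E = 0 ∨ μ E = 1)
    (c : ENNReal) (hc : 0 < c)
    (F : ℕ → Set X) (hF : ∀ k, MeasurableSet (F k))
    (h : ℕ → ℕ) (hh : Tendsto h atTop atTop)
    (hdisj : ∀ k, ∀ i < h k, ∀ j < h k, i ≠ j →
      Disjoint (T^[i] '' F k) (T^[j] '' F k))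
    (htower : ∀ k, c < μ (⋃ i ∈ Finset.range (h k), T^[i] '' F k)) :
    μ (⋂ n, ⋃ k, ⋃ _ : n ≤ k, ⋃ i ∈ Finset.range (h k), T^[i] '' F k) = 1 := by
  have he : MeasurableEmbedding T :=
    (MeasurableEquiv.mk ⟨T, S, hST, hTS⟩ hTmeas hSmeas).measurableEmbedding
  have hmp : MeasurePreserving T μ μ :=
    measurePreserving_of_measure_image_eq hTmeas hTS.surjective hTpres
  have herg : Ergodic T μ := ⟨hmp, preErgodic_of_measure_symmDiff_preimage_eq_zero hErg⟩
  have hlevels : ∀ k, (↑(Finset.range (h k)) : Set ℕ).PairwiseDisjoint (T^[·] '' F k) :=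
    fun k i hi j hj => hdisj k i (Finset.mem_range.1 hi) j (Finset.mem_range.1 hj)
  have hstay : ∀ p, ∃ᶠ k in atTop,
      c / 2 ≤ μ (⋂ j ≤ p, T^[j] ⁻¹' rohlinTower T (F k) (h k)) := fun p =>
    (hh.eventually_ge_atTop (2 * p) |>.mono fun k hk =>
      ENNReal.div_le_div_right (htower k).le 2 |>.trans
        (measure_rohlinTower_div_two_le hmp he (hF k) (hlevels k) hk)).frequently
  have := herg.measure_limsup_eq_one (fun k => measurableSet_rohlinTower he (hF k))
    (ENNReal.half_pos hc.ne') hstay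
  simpa only [limsup_eq_iInf_iSup_of_nat, iSup_eq_iUnion, iInf_eq_iInter, ge_iff_le,
    rohlinTower] using this

/-- **Borel–Cantelli-type lemma for Rohlin towers of an ergodic transformation.**
If `T` is an invertible measure-preserving ergodic transformation of a probability
space (with measurable inverse `S`) and `𝒯_k = ⋃_{i<h_k} T^i(F_k)` are Rohlin towers
with heights `h_k → ∞` and measures uniformly bounded below by `c > 0`, then a.e.
point belongs to infinitely many towers. -/
theorem rohlin_towers_limsup_full_measure
    {X : Type*} [MeasurableSpace X] (μ : Measure X) [IsProbabilityMeasure μ]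
    (T S : X → X) (hTbij : Function.Bijective T) (hTmeas : Measurable T)
    (hSmeas : Measurable S)
    (hST : Function.LeftInverse S T) (hTS : Function.RightInverse S T)
    (hTpres : ∀ E : Set X, MeasurableSet E → μ (T '' E) = μ E)
    (hErg : ∀ E : Set X, MeasurableSet E → μ (symmDiff E (T ⁻¹' E)) = 0 →
      μ E = 0 ∨ μ E = 1)
    (c : ENNReal) (hc : 0 < c)
    (F : ℕ → Set X) (hF : ∀ k, MeasurableSet (F k))
    (h : ℕ → ℕ) (hh : Tendsto h atTop atTop)
    (hdisj : ∀ k, ∀ i < h k, ∀ j < h k, i ≠ j →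
      Disjoint (T^[i] '' F k) (T^[j] '' F k))
    (htower : ∀ k, c < μ (⋃ i ∈ Finset.range (h k), T^[i] '' F k)) :
    μ (⋂ n, ⋃ k, ⋃ _ : n ≤ k, ⋃ i ∈ Finset.range (h k), T^[i] '' F k) = 1 :=
  rohlin_towers_limsup_full_measure_general μ T S hTmeas hSmeas hST hTS hTpres hErg c hc F hF h hh
    hdisj htower
end

section
/- Let d ≥ 2, let A be a finite set with |A| = d, and let π_t, π_b : A → {1,…,d} be bijections whose monodromy satisfies π_b(π_t⁻¹(1)) = d and π_b(π_t⁻¹(k)) = k − 1 for all k = 2,…,d. Let β* = π_b⁻¹(d) and define the linear map Ω_π : ℝ^A → ℝ^A by the matrix with entries Ω_{α,β} = +1 if π_b(α) > π_b(β) and π_t(α) < π_t(β); Ω_{α,β} = −1 if π_b(α) < π_b(β) and π_t(α) > π_t(β); and Ω_{α,β} = 0 otherwise. Then the kernel of Ω_π is exactly { v ∈ ℝ^A : v_{β*} = 0 and ∑_{α∈A} v_α = 0 }; in particular it has dimension d − 2. -/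
open Matrix

/-- For a combinatorial datum `π = (πt, πb)` of standard rotation form on an alphabet
`A` of cardinality `d ≥ 2`, the kernel of the associated translation matrix `Ω_π` is
exactly `{ v : v_{β*} = 0 and ∑ v_α = 0 }`, where `β* = πb⁻¹(d)`; in particular this
kernel has dimension `d - 2`. -/
theorem ker_translation_matrix_rotation_type
    {A : Type*} [Fintype A] [DecidableEq A] (d : ℕ) (hd : 2 ≤ d)
    (hcard : Fintype.card A = d)
    (πt πb : A ≃ Fin d)
    -- standard rotation form (indices written `0, …, d-1` instead of `1, …, d`):
    -- `πb (πt⁻¹ 1) = d` and `πb (πt⁻¹ k) = k - 1` for `k = 2, …, d`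
    (hrot1 : (πb (πt.symm ⟨0, by omega⟩) : ℕ) = d - 1)
    (hrot2 : ∀ k : Fin d, (k : ℕ) ≠ 0 → (πb (πt.symm k) : ℕ) = (k : ℕ) - 1)
    (βs : A) (hβs : (πb βs : ℕ) = d - 1)
    (Ω : Matrix A A ℝ)
    (hΩ : ∀ α β : A, Ω α β =
      if πb β < πb α ∧ πt α < πt β then 1
      else if πb α < πb β ∧ πt β < πt α then -1 else 0) :
    (∀ v : A → ℝ, Ω.mulVec v = 0 ↔ (v βs = 0 ∧ ∑ α, v α = 0)) ∧
    Module.finrank ℝ (LinearMap.ker Ω.mulVecLin) = d - 2 := by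
  have hdpos : 0 < d := by omega
  -- βs = πt.symm 0
  have hβs' : πt βs = ⟨0, hdpos⟩ := by
    have h : πb βs = πb (πt.symm ⟨0, hdpos⟩) := Fin.ext (by rw [hβs, hrot1])
    have h2 := πb.injective h
    rw [h2]; simp
  have hπb : ∀ α : A, (πt α : ℕ) ≠ 0 → (πb α : ℕ) = (πt α : ℕ) - 1 := by
    intro α h
    have := hrot2 (πt α) h
    simpa using this
  have hπb0 : ∀ α : A, (πt α : ℕ) = 0 → (πb α : ℕ) = d - 1 := by
    intro α h
    have hα : α = βs := πt.injective (by rw [hβs']; exact Fin.ext h)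
    rw [hα]; exact hβs
  have hαβs : ∀ α : A, α = βs ↔ (πt α : ℕ) = 0 := by
    intro α
    constructor
    · rintro rfl; rw [hβs']
    · intro h; exact πt.injective (by rw [hβs']; exact Fin.ext h)
  -- entries of Ω
  have hent : ∀ α β : A, Ω α β =
      if α = βs ∧ β ≠ βs then 1 else if β = βs ∧ α ≠ βs then -1 else 0 := by
    intro α β
    rw [hΩ]
    have ha := hαβs α
    have hb := hαβs β
    have hta : (πt α : ℕ) < d := (πt α).is_lt
    have htb : (πt β : ℕ) < d := (πt β).is_lt
    simp only [Fin.lt_def]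
    by_cases h1 : (πt α : ℕ) = 0 <;> by_cases h2 : (πt β : ℕ) = 0
    · have e1 := hπb0 α h1
      have e2 := hπb0 β h2
      rw [if_neg (by omega), if_neg (by omega)]
      simp [ha.mpr h1, hb.mpr h2]
    · have e1 := hπb0 α h1
      have e2 := hπb β h2
      rw [if_pos (by omega)]
      simp [ha.mpr h1, hb, h2]
    · have e1 := hπb α h1
      have e2 := hπb0 β h2
      rw [if_neg (by omega), if_pos (by omega)]
      simp [ha, h1, hb.mpr h2]
    · have e1 := hπb α h1
      have e2 := hπb β h2
      rw [if_neg (by omega), if_neg (by omega)]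
      simp [ha, h1, hb, h2]
  -- mulVec rows
  have hrow : ∀ (v : A → ℝ) (α : A),
      Ω.mulVec v α = if α = βs then (∑ β, v β) - v βs else -(v βs) := by
    intro v α
    by_cases hα : α = βs
    · subst hα
      rw [if_pos rfl]
      have : ∀ β : A, Ω α β * v β = v β - (if β = α then v β else 0) := by
        intro β
        rw [hent]
        by_cases h : β = α <;> simp [h]
      simp only [Matrix.mulVec, dotProduct]
      rw [Finset.sum_congr rfl fun β _ => this β, Finset.sum_sub_distrib,
        Finset.sum_ite_eq' Finset.univ α v]
      simp
    · rw [if_neg hα]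
      have : ∀ β : A, Ω α β * v β = if β = βs then -(v β) else 0 := by
        intro β
        rw [hent]
        by_cases h : β = βs <;> simp [h, hα]
      simp only [Matrix.mulVec, dotProduct]
      rw [Finset.sum_congr rfl fun β _ => this β,
        Finset.sum_ite_eq' Finset.univ βs (fun β => -(v β))]
      simp
  obtain ⟨α₀, hα₀⟩ := Fintype.exists_ne_of_one_lt_card (by omega) βs
  have key : ∀ v : A → ℝ, Ω.mulVec v = 0 ↔ (v βs = 0 ∧ ∑ α, v α = 0) := by
    intro v
    constructor
    · intro hv
      have h1 := congrFun hv α₀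
      have h2 := congrFun hv βs
      rw [hrow] at h1 h2
      rw [if_neg hα₀] at h1
      rw [if_pos rfl] at h2
      simp only [Pi.zero_apply] at h1 h2
      constructor
      · linarith
      · linarith
    · rintro ⟨h1, h2⟩
      funext α
      rw [hrow, h1, h2]
      simp
  refine ⟨key, ?_⟩
  let L : (A → ℝ) →ₗ[ℝ] ℝ × ℝ :=
    { toFun := fun v => (v βs, ∑ α, v α)
      map_add' := by intro x y; simp [Finset.sum_add_distrib]
      map_smul' := by intro c x; simp [Finset.mul_sum] }
  have hker : LinearMap.ker Ω.mulVecLin = LinearMap.ker L := by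
    ext v
    simp only [LinearMap.mem_ker, Matrix.mulVecLin_apply, L, LinearMap.coe_mk,
      AddHom.coe_mk, Prod.mk_eq_zero]
    exact key v
  have hsurj : Function.Surjective L := by
    rintro ⟨a, b⟩
    refine ⟨fun x => if x = βs then a else if x = α₀ then b - a else 0, ?_⟩
    simp only [L, LinearMap.coe_mk, AddHom.coe_mk]
    have hpt : ∀ x : A, (if x = βs then a else if x = α₀ then b - a else 0) =
        (if x = βs then a else 0) + (if x = α₀ then b - a else 0) := by
      intro x
      by_cases h1 : x = βs
      · subst h1; simp [Ne.symm hα₀]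
      · simp [h1]
    refine Prod.ext ?_ ?_
    · simp
    · simp only [hpt, Finset.sum_add_distrib, Finset.sum_ite_eq' Finset.univ,
        Finset.mem_univ, if_true]
      ring
  have hrange : LinearMap.range L = ⊤ := LinearMap.range_eq_top.mpr hsurj
  have hrk := LinearMap.finrank_range_add_finrank_ker L
  rw [hrange, finrank_top] at hrk
  have h1 : Module.finrank ℝ (ℝ × ℝ) = 2 := by
    simp [Module.finrank_prod]
  have h2 : Module.finrank ℝ (A → ℝ) = d := by
    simp [Module.finrank_pi, hcard]
  rw [h1, h2] at hrk
  rw [hker]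
  omega
end

section
/- Let d ≥ 2, let A be a finite set with |A| = d, and let π_t, π_b : A → {1,…,d} be bijections whose monodromy satisfies π_b(π_t⁻¹(1)) = d and π_b(π_t⁻¹(k)) = k − 1 for all k = 2,…,d. Let β* = π_b⁻¹(d) and let Ω_π : ℝ^A → ℝ^A be the linear map with entries Ω_{α,β} = +1 if π_b(α) > π_b(β) and π_t(α) < π_t(β); −1 if π_b(α) < π_b(β) and π_t(α) > π_t(β); 0 otherwise. Then, with respect to the standard inner product on ℝ^A, the orthogonal complement of ker(Ω_π) is the two-dimensional subspace spanned by the standard basis vector e_{β*} and the vector ∑_{δ ≠ β*} e_δ. -/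
/-!
In rotation form `β*` comes first on top and last on the bottom, while every other letter moves
exactly one place, so the only inverted pairs are those containing `β*`. Hence
`Ω = e_{β*} vᵀ - v e_{β*}ᵀ` with `v = ∑_{δ ≠ β*} e_δ`, i.e. `Ω x = ⟪v, x⟫ e_{β*} - ⟪e_{β*}, x⟫ v`.
As `e_{β*}` and `v` are linearly independent (`d ≥ 2`), `ker Ω = (span {e_{β*}, v})ᗮ`, and taking
orthogonal complements in finite dimension gives the claim.
-/

open Matrix

section InnerProductSpace

variable {E : Type*} [NormedAddCommGroup E] [InnerProductSpace ℝ E]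

open Submodule in
theorem Submodule.mem_orthogonal_span_pair_iff {u v x : E} :
    x ∈ (span ℝ {u, v})ᗮ ↔ inner ℝ u x = 0 ∧ inner ℝ v x = 0 := by
  rw [span_insert, ← inf_orthogonal, mem_inf, mem_orthogonal_singleton_iff_inner_right,
    mem_orthogonal_singleton_iff_inner_right]

theorem LinearMap.ker_eq_orthogonal_span_pair {u v : E} (huv : LinearIndependent ℝ ![u, v])
    (f : E →ₗ[ℝ] E) (hf : ∀ x, f x = inner ℝ v x • u - inner ℝ u x • v) :
    LinearMap.ker f = (Submodule.span ℝ {u, v})ᗮ := by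
  ext x
  rw [LinearMap.mem_ker, hf, Submodule.mem_orthogonal_span_pair_iff, sub_eq_add_neg, ← neg_smul]
  constructor
  · intro h
    obtain ⟨hv, hu⟩ := LinearIndependent.pair_iff.mp huv _ _ h
    exact ⟨neg_eq_zero.mp hu, hv⟩
  · rintro ⟨hu, hv⟩
    simp [hu, hv]

end InnerProductSpace

theorem finrank_span_pair {K V : Type*} [DivisionRing K] [AddCommGroup V] [Module K V] {x y : V}
    (h : LinearIndependent K ![x, y]) : Module.finrank K (Submodule.span K {x, y}) = 2 := by
  rw [← Matrix.range_cons_cons_empty x y ![], finrank_span_eq_card h, Fintype.card_fin]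

theorem Matrix.toEuclideanLin_vecMulVec_sub_vecMulVec {n : Type*} [Fintype n] [DecidableEq n]
    (u v x : EuclideanSpace ℝ n) :
    toEuclideanLin (vecMulVec u.ofLp v.ofLp - vecMulVec v.ofLp u.ofLp) x =
      inner ℝ v x • u - inner ℝ u x • v := by
  ext i
  simp [vecMulVec_mulVec, EuclideanSpace.inner_eq_star_dotProduct, dotProduct_comm]
  ring

theorem EuclideanSpace.linearIndependent_single_indicator_compl {A : Type*} [DecidableEq A]
    {βs α₀ : A} (hα₀ : α₀ ≠ βs) :
    LinearIndependent ℝ ![EuclideanSpace.single βs (1 : ℝ),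
      (WithLp.equiv 2 (A → ℝ)).symm (fun δ => if δ = βs then 0 else 1)] := by
  refine LinearIndependent.pair_iff.mpr fun s t hst => ⟨?_, ?_⟩
  · simpa [hα₀] using congrArg (· βs) hst
  · simpa [hα₀] using congrArg (· α₀) hst

theorem Equiv.val_apply_lt_pred_of_ne {A : Type*} {d : ℕ} (e : A ≃ Fin d) {a b : A}
    (hb : (e b : ℕ) = d - 1) (hab : a ≠ b) : (e a : ℕ) < d - 1 := by
  have hne : (e a : ℕ) ≠ e b := fun h => hab (e.injective (Fin.ext h))
  have := (e a).isLt
  omega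

section RotationForm

variable {A : Type*} {d : ℕ} {πt πb : A ≃ Fin d} {βs : A}

theorem top_eq_zero_of_rotation (h0 : 0 < d)
    (hrot1 : (πb (πt.symm ⟨0, h0⟩) : ℕ) = d - 1) (hβs : (πb βs : ℕ) = d - 1) :
    (πt βs : ℕ) = 0 := by
  rw [← πb.injective (Fin.ext (hrot1.trans hβs.symm)), Equiv.apply_symm_apply]

theorem top_eq_bot_add_one_of_rotation (h0 : 0 < d)
    (hrot1 : (πb (πt.symm ⟨0, h0⟩) : ℕ) = d - 1)
    (hrot2 : ∀ k : Fin d, (k : ℕ) ≠ 0 → (πb (πt.symm k) : ℕ) = (k : ℕ) - 1)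
    (hβs : (πb βs : ℕ) = d - 1) {γ : A} (hγ : γ ≠ βs) :
    (πt γ : ℕ) = πb γ + 1 := by
  have hne : (πt γ : ℕ) ≠ 0 := by
    rw [← top_eq_zero_of_rotation h0 hrot1 hβs]
    exact fun h => hγ (πt.injective (Fin.ext h))
  have := hrot2 (πt γ) hne
  rw [Equiv.symm_apply_apply] at this
  omega

theorem inversion_iff_of_rotation (h0 : 0 < d)
    (hrot1 : (πb (πt.symm ⟨0, h0⟩) : ℕ) = d - 1)
    (hrot2 : ∀ k : Fin d, (k : ℕ) ≠ 0 → (πb (πt.symm k) : ℕ) = (k : ℕ) - 1)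
    (hβs : (πb βs : ℕ) = d - 1) (α β : A) :
    πb β < πb α ∧ πt α < πt β ↔ α = βs ∧ β ≠ βs := by
  have htop := top_eq_zero_of_rotation h0 hrot1 hβs
  rw [Fin.lt_def, Fin.lt_def]
  by_cases hα : α = βs <;> by_cases hβ : β = βs
  · subst hα hβ; simp
  · subst hα
    have := top_eq_bot_add_one_of_rotation h0 hrot1 hrot2 hβs hβ
    have := πb.val_apply_lt_pred_of_ne hβs hβ
    simp only [hβ, ne_eq, not_false_eq_true, and_true, iff_true]
    omega
  · subst hβ
    have := πb.val_apply_lt_pred_of_ne hβs hα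
    simp only [hα, false_and, iff_false]
    omega
  · have := top_eq_bot_add_one_of_rotation h0 hrot1 hrot2 hβs hα
    have := top_eq_bot_add_one_of_rotation h0 hrot1 hrot2 hβs hβ
    simp only [hα, false_and, iff_false]
    omega

end RotationForm

/-- For a combinatorial datum `π = (πt, πb)` of standard rotation form on an alphabet
`A` of cardinality `d ≥ 2`, the orthogonal complement (in `ℝ^A` with its standard
inner product) of the kernel of the translation matrix `Ω_π` is the two-dimensional
subspace spanned by the basis vector `e_{β*}` and the vector `∑_{δ ≠ β*} e_δ`. -/
theorem orth_ker_translation_matrix_rotation_type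
    {A : Type*} [Fintype A] [DecidableEq A] (d : ℕ) (hd : 2 ≤ d)
    (πt πb : A ≃ Fin d)
    (hrot1 : (πb (πt.symm ⟨0, by omega⟩) : ℕ) = d - 1)
    (hrot2 : ∀ k : Fin d, (k : ℕ) ≠ 0 → (πb (πt.symm k) : ℕ) = (k : ℕ) - 1)
    (βs : A) (hβs : (πb βs : ℕ) = d - 1)
    (Ω : Matrix A A ℝ)
    (hΩ : ∀ α β : A, Ω α β =
      if πb β < πb α ∧ πt α < πt β then 1
      else if πb α < πb β ∧ πt β < πt α then -1 else 0) :
    (LinearMap.ker (Matrix.toEuclideanLin Ω))ᗮ =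
      Submodule.span ℝ
        {EuclideanSpace.single βs (1 : ℝ),
         (WithLp.equiv 2 (A → ℝ)).symm (fun δ => if δ = βs then 0 else 1)} ∧
    Module.finrank ℝ ((LinearMap.ker (Matrix.toEuclideanLin Ω))ᗮ : Submodule ℝ (EuclideanSpace ℝ A)) = 2 := by
  set u := EuclideanSpace.single βs (1 : ℝ)
  set v := (WithLp.equiv 2 (A → ℝ)).symm (fun δ => if δ = βs then (0 : ℝ) else 1)
  have hΩuv : Ω = vecMulVec u.ofLp v.ofLp - vecMulVec v.ofLp u.ofLp := by
    ext α β
    simp only [hΩ, inversion_iff_of_rotation _ hrot1 hrot2 hβs]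
    by_cases hα : α = βs <;> by_cases hβ : β = βs <;> simp [u, v, vecMulVec, hα, hβ]
  obtain ⟨α₀, hα₀⟩ := Fintype.exists_ne_of_one_lt_card
    (by rw [Fintype.card_congr πt, Fintype.card_fin]; omega) βs
  have huv : LinearIndependent ℝ ![u, v] :=
    EuclideanSpace.linearIndependent_single_indicator_compl hα₀
  have hker : LinearMap.ker (toEuclideanLin Ω) = (Submodule.span ℝ {u, v})ᗮ :=
    LinearMap.ker_eq_orthogonal_span_pair huv _ fun x => by
      rw [hΩuv, toEuclideanLin_vecMulVec_sub_vecMulVec]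
  rw [hker, Submodule.orthogonal_orthogonal]
  exact ⟨rfl, finrank_span_pair huv⟩
end
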